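/- For every α > 0 there exists a continuous function h : [0,∞) → [0,∞) with h(t) = 0 on [0,1] that is unbounded, and such that for every integer n ≥ 1 and every q ∈ [1,∞), ∫ₙ^{n+1} h(t)^q dt = (2^{2q-1}/(q+1)) · n^{q−α−1}. -/

import Mathlib

/-!
Take for `h` a train of triangular spikes: on `[n, n + 1]` a tent of height `4n` over a base of
length `2w`, `w = 1 / (4 n^(α+1))`. The heights make `h` unbounded, while rescaling a tent to the
standard hat `max 0 (1 - |u|)` shows `∫ tent^q = 2 w H^q / (q + 1)`, which for `H = 4n` is
`2^(2q-1) n^(q-α-1) / (q + 1)`. Since the spikes have disjoint supports inside the unit intervals,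
their sum is locally finite, hence continuous.
-/

open MeasureTheory Set Function

noncomputable section

def hat (u : ℝ) : ℝ := max 0 (1 - |u|)

def tent (c w H t : ℝ) : ℝ := H * hat ((t - c) / w)

lemma hat_nonneg (u : ℝ) : 0 ≤ hat u := le_max_left _ _

@[fun_prop]
lemma continuous_hat : Continuous hat := by
  unfold hat; fun_prop

lemma hat_zero : hat 0 = 1 := by norm_num [hat]

lemma hat_eq_zero {u : ℝ} (hu : 1 ≤ |u|) : hat u = 0 :=
  max_eq_left (by linarith)

lemma intervalIntegrable_hat_rpow {q : ℝ} (hq : 0 ≤ q) (a b : ℝ) :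
    IntervalIntegrable (fun u => hat u ^ q) volume a b :=
  (continuous_hat.rpow_const fun _ => Or.inr hq).intervalIntegrable a b

lemma integral_hat_rpow {q : ℝ} (hq : 0 < q) : ∫ u in (-1)..1, hat u ^ q = 2 / (q + 1) := by
  have hint := intervalIntegrable_hat_rpow hq.le
  have hleft : ∫ u in (-1)..0, hat u ^ q = ∫ u in (-1)..0, (1 + u) ^ q := by
    refine intervalIntegral.integral_congr fun u hu => ?_
    rw [uIcc_of_le (by norm_num)] at hu
    simp only [hat, abs_of_nonpos hu.2, sub_neg_eq_add,
      max_eq_right (by linarith [hu.1] : (0:ℝ) ≤ 1 + u)]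
  have hright : ∫ u in (0:ℝ)..1, hat u ^ q = ∫ u in (0:ℝ)..1, (1 - u) ^ q := by
    refine intervalIntegral.integral_congr fun u hu => ?_
    rw [uIcc_of_le (by norm_num)] at hu
    simp only [hat, abs_of_nonneg hu.1, max_eq_right (by linarith [hu.2] : (0:ℝ) ≤ 1 - u)]
  have hpow : ∫ x in (0:ℝ)..1, x ^ q = 1 / (q + 1) := by
    rw [integral_rpow (Or.inl (by linarith)), Real.one_rpow, Real.zero_rpow (by linarith)]
    ring
  rw [← intervalIntegral.integral_add_adjacent_intervals (hint _ _) (hint _ _), hleft, hright,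
    intervalIntegral.integral_comp_add_left (fun x => x ^ q),
    intervalIntegral.integral_comp_sub_left (fun x => x ^ q)]
  norm_num [hpow]
  ring

lemma integral_hat_rpow_of_le {a b q : ℝ} (hq : 0 < q) (ha : a ≤ -1) (hb : 1 ≤ b) :
    ∫ u in a..b, hat u ^ q = 2 / (q + 1) := by
  have hint := intervalIntegrable_hat_rpow hq.le
  have hzero : ∀ {a b : ℝ}, (∀ u ∈ Icc a b, 1 ≤ |u|) → a ≤ b →
      ∫ u in a..b, hat u ^ q = 0 :=
    fun hab hle => by
      rw [intervalIntegral.integral_congr (g := fun _ => 0), intervalIntegral.integral_zero]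
      intro u hu
      rw [uIcc_of_le hle] at hu
      simp only [hat_eq_zero (hab u hu), Real.zero_rpow hq.ne']
  rw [← intervalIntegral.integral_add_adjacent_intervals (hint a (-1)) (hint (-1) b),
    ← intervalIntegral.integral_add_adjacent_intervals (hint (-1) 1) (hint 1 b),
    integral_hat_rpow hq,
    hzero (fun u hu => by rw [abs_of_neg (by linarith [hu.2])]; linarith [hu.2]) ha,
    hzero (fun u hu => by rw [abs_of_pos (by linarith [hu.1])]; linarith [hu.1]) hb]
  ring

lemma integral_tent_rpow {a b c w H q : ℝ} (hw : 0 < w) (hH : 0 ≤ H) (hq : 0 < q)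
    (ha : a ≤ c - w) (hb : c + w ≤ b) :
    ∫ t in a..b, tent c w H t ^ q = 2 * w * H ^ q / (q + 1) := by
  simp only [tent, Real.mul_rpow hH (hat_nonneg _), sub_div]
  rw [intervalIntegral.integral_const_mul,
    intervalIntegral.integral_comp_div_sub (fun u => hat u ^ q) hw.ne',
    integral_hat_rpow_of_le hq, smul_eq_mul]
  · ring
  · rw [← sub_div, div_le_iff₀ hw]; linarith
  · rw [← sub_div, le_div_iff₀ hw]; linarith

lemma support_tent_subset {c w H : ℝ} (hw : 0 < w) :
    support (tent c w H) ⊆ Ioo (c - w) (c + w) := by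
  intro t ht
  have h : |(t - c) / w| < 1 := not_le.mp fun h => ht (by rw [tent, hat_eq_zero h, mul_zero])
  rw [abs_div, abs_of_pos hw, div_lt_one hw, abs_lt] at h
  constructor <;> linarith [h.1, h.2]

lemma tent_center (c w H : ℝ) : tent c w H c = H := by
  rw [tent, sub_self, zero_div, hat_zero, mul_one]

lemma continuous_tent (c w H : ℝ) : Continuous (tent c w H) := by
  unfold tent; fun_prop

section UnitSupports

variable {M : Type*} [AddCommMonoid M] {f : ℕ → ℝ → M}

lemma locallyFinite_support_of_subset_Ioo (hf : ∀ n, support (f n) ⊆ Ioo (n : ℝ) (n + 1)) :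
    LocallyFinite fun n => support (f n) := by
  intro x
  refine ⟨Ioo (x - 1) (x + 1), Ioo_mem_nhds (by linarith) (by linarith),
    (finite_Iio ⌈x + 1⌉₊).subset fun n ⟨t, htn, htx⟩ => ?_⟩
  have := hf n htn
  exact Nat.lt_ceil.mpr (by linarith [this.1, htx.2])

lemma finsum_eq_of_mem_Icc (hf : ∀ n, support (f n) ⊆ Ioo (n : ℝ) (n + 1)) {n : ℕ} {t : ℝ}
    (ht : t ∈ Icc (n : ℝ) (n + 1)) : ∑ᶠ m, f m t = f n t := by
  refine finsum_eq_single _ n fun m hmn => ?_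
  by_contra hm
  replace hm := hf m hm
  have h1 : m < n + 1 := by exact_mod_cast (by linarith [hm.1, ht.2] : (m : ℝ) < n + 1)
  have h2 : n < m + 1 := by exact_mod_cast (by linarith [hm.2, ht.1] : (n : ℝ) < m + 1)
  exact hmn (by omega)

end UnitSupports

def spikeWidth (α : ℝ) (n : ℕ) : ℝ := 1 / (4 * (n : ℝ) ^ (α + 1))

/-- The paper's tent on `[n, n + 1/(2 n^(α+1))]` with slopes `±16 n^(α+2)`. For `n = 0` the width
is the junk value `1 / 0 = 0`, but the height `4n` vanishes, so `spike α 0 = 0`. -/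
def spike (α : ℝ) (n : ℕ) : ℝ → ℝ := tent (n + spikeWidth α n) (spikeWidth α n) (4 * n)

def spikeTrain (α t : ℝ) : ℝ := ∑ᶠ n : ℕ, spike α n t

lemma spike_zero (α : ℝ) : spike α 0 = 0 := by
  ext t; simp [spike, tent]

lemma spike_nonneg (α : ℝ) (n : ℕ) (t : ℝ) : 0 ≤ spike α n t :=
  mul_nonneg (by positivity) (hat_nonneg _)

lemma spikeWidth_pos (α : ℝ) {n : ℕ} (hn : 1 ≤ n) : 0 < spikeWidth α n := by
  have : (0 : ℝ) < n := by exact_mod_cast hn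
  unfold spikeWidth; positivity

lemma spikeWidth_le {α : ℝ} (hα : -1 ≤ α) {n : ℕ} (hn : 1 ≤ n) :
    spikeWidth α n ≤ 1 / 4 := by
  have : (1 : ℝ) ≤ (n : ℝ) ^ (α + 1) := Real.one_le_rpow (by exact_mod_cast hn) (by linarith)
  unfold spikeWidth
  gcongr
  linarith

lemma support_spike_subset {α : ℝ} (hα : -1 ≤ α) (n : ℕ) :
    support (spike α n) ⊆ Ioo (n : ℝ) (n + 1) := by
  rcases Nat.eq_zero_or_pos n with rfl | hn
  · simp [spike_zero]
  have hw := spikeWidth_le hα hn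
  refine (support_tent_subset (spikeWidth_pos α hn)).trans (Ioo_subset_Ioo ?_ ?_) <;> linarith

lemma spikeTrain_eq_spike {α : ℝ} (hα : -1 ≤ α) {n : ℕ} {t : ℝ}
    (ht : t ∈ Icc (n : ℝ) (n + 1)) :
    spikeTrain α t = spike α n t :=
  finsum_eq_of_mem_Icc (support_spike_subset hα) ht

lemma continuous_spikeTrain {α : ℝ} (hα : -1 ≤ α) : Continuous (spikeTrain α) :=
  continuous_finsum (fun _ => continuous_tent _ _ _)
    (locallyFinite_support_of_subset_Ioo (support_spike_subset hα))

lemma spikeTrain_peak {α : ℝ} (hα : -1 ≤ α) {n : ℕ} (hn : 1 ≤ n) :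
    spikeTrain α (n + spikeWidth α n) = 4 * n := by
  have hw := spikeWidth_pos α hn
  rw [spikeTrain_eq_spike hα ⟨by linarith, by linarith [spikeWidth_le hα hn]⟩, spike,
    tent_center]

lemma two_mul_spikeWidth_mul_rpow (α q : ℝ) {n : ℕ} (hn : 1 ≤ n) :
    2 * spikeWidth α n * (4 * n) ^ q = 2 ^ (2 * q - 1) * (n : ℝ) ^ (q - α - 1) := by
  have hn : (0 : ℝ) < n := by exact_mod_cast hn
  have h4 : (4 : ℝ) ^ q = 2 ^ (2 * q) := by
    rw [Real.rpow_mul (by norm_num)]; norm_num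
  rw [spikeWidth, Real.mul_rpow (by norm_num) hn.le, h4, Real.rpow_sub (by norm_num),
    Real.rpow_sub hn, Real.rpow_sub hn, Real.rpow_add hn, Real.rpow_one, Real.rpow_one]
  field_simp
  ring

lemma integral_spike_rpow {α q : ℝ} (hα : -1 ≤ α) (hq : 0 < q) {n : ℕ} (hn : 1 ≤ n) :
    ∫ t in (n : ℝ)..(n + 1), spike α n t ^ q
      = 2 ^ (2 * q - 1) / (q + 1) * (n : ℝ) ^ (q - α - 1) := by
  rw [spike, integral_tent_rpow (spikeWidth_pos α hn) (by positivity) hq (by simp)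
    (by linarith [spikeWidth_le hα hn]), two_mul_spikeWidth_mul_rpow α q hn]
  ring

end

theorem stmt_5 (α : ℝ) (hα : 0 < α) :
    ∃ h : ℝ → ℝ, ContinuousOn h (Ici 0) ∧ (∀ t ∈ Ici (0:ℝ), 0 ≤ h t) ∧
      (∀ t ∈ Icc (0:ℝ) 1, h t = 0) ∧
      (¬ ∃ C : ℝ, ∀ t ∈ Ici (0:ℝ), h t ≤ C) ∧
      (∀ n : ℕ, 1 ≤ n → ∀ q : ℝ, 1 ≤ q →
        ∫ t in (n:ℝ)..(n+1), (h t) ^ q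
          = (2 ^ (2*q - 1) / (q + 1)) * (n:ℝ) ^ (q - α - 1)) := by
  have hα₁ : -1 ≤ α := by linarith
  refine ⟨spikeTrain α, (continuous_spikeTrain hα₁).continuousOn,
    fun t _ => finsum_nonneg fun n => spike_nonneg α n t, fun t ht => ?_, ?_, ?_⟩
  · rw [spikeTrain_eq_spike (n := 0) hα₁ (by simpa using ht), spike_zero, Pi.zero_apply]
  · rintro ⟨C, hC⟩
    obtain ⟨n, hn⟩ := exists_nat_gt C
    have hw := spikeWidth_pos α n.succ_pos
    have hpeak := hC ((n + 1 : ℕ) + spikeWidth α (n + 1)) (mem_Ici.mpr (by positivity))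
    rw [spikeTrain_peak hα₁ n.succ_pos] at hpeak
    push_cast at hpeak
    linarith
  · intro n hn q hq
    rw [intervalIntegral.integral_congr fun t ht => by
      rw [spikeTrain_eq_spike hα₁ (by rwa [uIcc_of_le (by linarith)] at ht)]]
    exact integral_spike_rpow hα₁ (by linarith) hn
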